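/- Every root of the polynomial x³ − a x² − (a+3)x − 1 (a ∈ ℤ) is a unit in the ring of algebraic integers, and if ρ is a root then −1/(ρ+1) is also a root. -/

import Mathlib

/-!
The polynomial is monic with constant term `-1`, so a root `ρ` is an algebraic integer and
`ρ * (ρ² - aρ - (a+3)) = 1` exhibits an integral inverse. Substituting `-1/(ρ+1)` turns the
polynomial into `-p(ρ)/(ρ+1)³`, and `ρ ≠ -1` because `p(-1) = 1`.
-/

open Polynomial

theorem exists_isIntegral_mul_eq_one_of_aeval_eq_zero {R A : Type*} [CommRing R] [CommRing A]
    [Algebra R A] {p : R[X]} (hp : p.Monic) (hcoeff : IsUnit (p.coeff 0)) {x : A}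
    (hx : aeval x p = 0) : ∃ y : A, IsIntegral R y ∧ x * y = 1 := by
  obtain ⟨u, hu⟩ := hcoeff
  have hint : IsIntegral R x := ⟨p, hp, hx⟩
  have hdivX : x * aeval x p.divX = -algebraMap R A (p.coeff 0) := by
    have := congrArg (aeval x) (X_mul_divX_add p)
    rw [map_add, map_mul, aeval_X, aeval_C, hx] at this
    exact eq_neg_of_add_eq_zero_left this
  refine ⟨-((↑u⁻¹ : R) • aeval x p.divX), ?_, ?_⟩
  · exact (IsIntegral.smul _ (adjoin_le_integralClosure hint
      (aeval_mem_adjoin_singleton R x))).neg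
  · rw [mul_neg, mul_smul_comm, hdivX, smul_neg, neg_neg, Algebra.smul_def, ← map_mul, ← hu,
      Units.inv_mul, map_one]

noncomputable def shanksCubic (a : ℤ) : ℤ[X] :=
  X ^ 3 - C a * X ^ 2 - C (a + 3) * X - 1

namespace shanksCubic

theorem monic (a : ℤ) : (shanksCubic a).Monic := by
  unfold shanksCubic
  monicity!

theorem coeff_zero (a : ℤ) : (shanksCubic a).coeff 0 = -1 := by
  simp [shanksCubic]

theorem aeval_eq {A : Type*} [CommRing A] (a : ℤ) (x : A) :
    aeval x (shanksCubic a) = x ^ 3 - a * x ^ 2 - (a + 3) * x - 1 := by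
  simp [shanksCubic, map_ofNat]

theorem aeval_neg_one {A : Type*} [CommRing A] (a : ℤ) : aeval (-1 : A) (shanksCubic a) = 1 := by
  rw [aeval_eq]
  ring

theorem add_one_ne_zero_of_aeval_eq_zero {A : Type*} [CommRing A] [Nontrivial A] {a : ℤ} {x : A}
    (hx : aeval x (shanksCubic a) = 0) : x + 1 ≠ 0 := by
  intro h
  rw [eq_neg_of_add_eq_zero_left h, aeval_neg_one] at hx
  exact one_ne_zero hx

theorem aeval_neg_one_div_add_one {K : Type*} [Field K] (a : ℤ) {x : K} (hx : x + 1 ≠ 0) :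
    aeval (-1 / (x + 1)) (shanksCubic a) = -aeval x (shanksCubic a) / (x + 1) ^ 3 := by
  rw [aeval_eq, aeval_eq]
  field_simp
  ring

end shanksCubic

/-- Every root of `x³ − a x² − (a+3)x − 1` is a unit in the ring of algebraic
integers, and if `ρ` is a root then so is `−1/(ρ+1)`. -/
theorem shanks_cubic_roots_units (a : ℤ) (ρ : ℂ)
    (hρ : ρ ^ 3 - a * ρ ^ 2 - (a + 3) * ρ - 1 = 0) :
    IsIntegral ℤ ρ ∧ (∃ v : ℂ, IsIntegral ℤ v ∧ ρ * v = 1) ∧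
    ρ + 1 ≠ 0 ∧
    (-1 / (ρ + 1)) ^ 3 - a * (-1 / (ρ + 1)) ^ 2 - (a + 3) * (-1 / (ρ + 1)) - 1 = 0 := by
  have hroot : aeval ρ (shanksCubic a) = 0 := by rwa [shanksCubic.aeval_eq]
  have hne : ρ + 1 ≠ 0 := shanksCubic.add_one_ne_zero_of_aeval_eq_zero hroot
  refine ⟨⟨_, shanksCubic.monic a, hroot⟩,
    exists_isIntegral_mul_eq_one_of_aeval_eq_zero (shanksCubic.monic a)
      (by simp [shanksCubic.coeff_zero]) hroot, hne, ?_⟩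
  rw [← shanksCubic.aeval_eq, shanksCubic.aeval_neg_one_div_add_one a hne, hroot, neg_zero,
    zero_div]
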